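/- Let s₆ ≈ 2.154 be the unique root in the interval (2,3) of s⁴ − 3s³ + 3s² − 3s + 1 = 0. Fix a real s with 2 ≤ s ≤ s₆ and consider the instance of the favorite-machine scheduling game on two machines with parameter s consisting of three jobs: A of size 1/(s(s − 1)) with favorite machine 2; B of size 1/s with favorite machine 1; and C of size (s − 1)/s with favorite machine 1. Then the allocation assigning A and C to machine 1 and B to machine 2 is a strong equilibrium whose makespan equals (s² − s + 1)/(s² − s), while the optimal makespan of this instance is at most 1. Consequently, the strong price of anarchy at parameter s is at least (s² − s + 1)/(s² − s). -/

import Mathlib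

open Finset

/-- Processing time of job `j` on machine `i` in the favorite-machine model:
`q j` on the favorite machine `f j` and `s * q j` on the other machine. -/
noncomputable def ptime (s : ℝ) {n : ℕ} (q : Fin n → ℝ) (f : Fin n → Fin 2)
    (i : Fin 2) (j : Fin n) : ℝ :=
  if f j = i then q j else s * q j

/-- Load of machine `i` under allocation `x`. -/
noncomputable def load (s : ℝ) {n : ℕ} (q : Fin n → ℝ) (f : Fin n → Fin 2)
    (x : Fin n → Fin 2) (i : Fin 2) : ℝ :=
  ∑ j ∈ Finset.univ.filter (fun j => x j = i), ptime s q f i j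

/-- Makespan (maximum load) of allocation `x`. -/
noncomputable def makespan (s : ℝ) {n : ℕ} (q : Fin n → ℝ) (f : Fin n → Fin 2)
    (x : Fin n → Fin 2) : ℝ :=
  max (load s q f x 0) (load s q f x 1)

/-- The optimal (minimum) makespan over all allocations. -/
noncomputable def optMakespan (s : ℝ) {n : ℕ} (q : Fin n → ℝ) (f : Fin n → Fin 2) : ℝ :=
  ⨅ y : Fin n → Fin 2, makespan s q f y

/-- Pure Nash equilibrium: no job can move to the other machine and find there
a load smaller than its current cost. -/
def IsNE (s : ℝ) {n : ℕ} (q : Fin n → ℝ) (f : Fin n → Fin 2)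
    (x : Fin n → Fin 2) : Prop :=
  ∀ j : Fin n, ∀ i : Fin 2, i ≠ x j →
    load s q f x (x j) ≤ load s q f (Function.update x j i) i

/-- Strong equilibrium: for every deviation `y` differing from `x` on a nonempty
set of jobs, some deviating job does not improve its cost. -/
def IsSE (s : ℝ) {n : ℕ} (q : Fin n → ℝ) (f : Fin n → Fin 2)
    (x : Fin n → Fin 2) : Prop :=
  ∀ y : Fin n → Fin 2, (∃ j, y j ≠ x j) →
    ∃ j, y j ≠ x j ∧ load s q f x (x j) ≤ load s q f y (y j)

/-!
Put `A` and `C` on machine 1 and `B` on machine 2. Machine 2 then has load `1` and machine 1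
has load `1 + 1/(s(s-1))`, whereas every job on its favorite machine gives makespan `1`.
A coalition in which `B` moves to machine 1 fails `B`, since there it meets `A` or `C`, unless
both `A` and `C` leave as well; a coalition in which `A` returns to its favorite machine fails
`A` as soon as `B` or `C` is there too; the only coalition left is `{C}`, which finds load `s`.
The bound `s ≤ s₆` enters only for the coalition `{B, C}`: `B` then pays `1/s + 1/(s-1)`, which
is at least `1` exactly when `s² - 3s + 1 ≤ 0`.
-/

section Loads

variable {s : ℝ} {n : ℕ} {q : Fin n → ℝ} {f : Fin n → Fin 2}

lemma ptime_nonneg (hs : 0 ≤ s) (hq : ∀ j, 0 ≤ q j) (i : Fin 2) (j : Fin n) :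
    0 ≤ ptime s q f i j := by
  unfold ptime
  split_ifs
  · exact hq j
  · exact mul_nonneg hs (hq j)

lemma load_nonneg (hs : 0 ≤ s) (hq : ∀ j, 0 ≤ q j) (y : Fin n → Fin 2) (i : Fin 2) :
    0 ≤ load s q f y i :=
  Finset.sum_nonneg fun j _ => ptime_nonneg hs hq i j

lemma ptime_add_ptime_le_load (hs : 0 ≤ s) (hq : ∀ j, 0 ≤ q j) {y : Fin n → Fin 2}
    {i : Fin 2} {j k : Fin n} (hjk : j ≠ k) (hj : y j = i) (hk : y k = i) :
    ptime s q f i j + ptime s q f i k ≤ load s q f y i := by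
  rw [← Finset.sum_pair hjk]
  refine Finset.sum_le_sum_of_subset_of_nonneg ?_ fun l _ _ => ptime_nonneg hs hq i l
  intro l hl
  rcases Finset.mem_insert.mp hl with rfl | hl
  · simpa using hj
  · simpa [Finset.mem_singleton.mp hl] using hk

lemma optMakespan_le_makespan (hs : 0 ≤ s) (hq : ∀ j, 0 ≤ q j) (y : Fin n → Fin 2) :
    optMakespan s q f ≤ makespan s q f y :=
  ciInf_le ⟨0, by rintro _ ⟨z, rfl⟩; exact le_max_of_le_left (load_nonneg hs hq z 0)⟩ y

end Loads

lemma load_fin_three (s : ℝ) (q : Fin 3 → ℝ) (f y : Fin 3 → Fin 2) (i : Fin 2) :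
    load s q f y i = (if y 0 = i then ptime s q f i 0 else 0)
      + (if y 1 = i then ptime s q f i 1 else 0) + (if y 2 = i then ptime s q f i 2 else 0) := by
  rw [load, Finset.sum_filter, Fin.sum_univ_three]

lemma sq_sub_three_mul_add_one_neg_of_root {t : ℝ} (ht : 1 < t)
    (hroot : t ^ 4 - 3 * t ^ 3 + 3 * t ^ 2 - 3 * t + 1 = 0) : t ^ 2 - 3 * t + 1 < 0 := by
  -- t⁴ - 3t³ + 3t² - 3t + 1 = t² (t² - 3t + 1) + (2t - 1)(t - 1)
  have hpos : 0 < (2 * t - 1) * (t - 1) := by nlinarith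
  have : t ^ 2 * (t ^ 2 - 3 * t + 1) < 0 := by nlinarith
  exact neg_of_mul_neg_right this (sq_nonneg t)

/-- Jobs `A`, `B`, `C` are indexed `0`, `1`, `2`; machines `1`, `2` are indexed `0`, `1`. -/
noncomputable def jobSize (s : ℝ) : Fin 3 → ℝ := ![1 / (s * (s - 1)), 1 / s, (s - 1) / s]

def jobFavorite : Fin 3 → Fin 2 := ![1, 0, 0]

def seAlloc : Fin 3 → Fin 2 := ![0, 1, 0]

section Instance

variable {s : ℝ}

local notation "L" => load s (jobSize s) jobFavorite

lemma jobSize_nonneg (hs : 1 ≤ s) (j : Fin 3) : 0 ≤ jobSize s j := by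
  have : 0 ≤ s - 1 := by linarith
  fin_cases j <;> simp [jobSize] <;> positivity

lemma ptime_jobSize (hs : s ≠ 0) : ptime s (jobSize s) jobFavorite =
    ![![1 / (s - 1), 1 / s, (s - 1) / s], ![1 / (s * (s - 1)), 1, s - 1]] := by
  ext i j
  fin_cases i <;> fin_cases j <;> simp [ptime, jobSize, jobFavorite] <;> field_simp

lemma load_seAlloc_zero (hs : 1 < s) : L seAlloc 0 = 1 + 1 / (s * (s - 1)) := by
  have hs1 : s - 1 ≠ 0 := by linarith
  have hAC : L seAlloc 0 = 1 / (s - 1) + (s - 1) / s := by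
    rw [load_fin_three, ptime_jobSize (by positivity)]
    simp [seAlloc]
  rw [hAC]
  field_simp
  ring

lemma load_seAlloc_one (hs : 0 < s) : L seAlloc 1 = 1 := by
  rw [load_fin_three, ptime_jobSize hs.ne']
  simp [seAlloc]

lemma makespan_seAlloc (hs : 1 < s) :
    makespan s (jobSize s) jobFavorite seAlloc = (s ^ 2 - s + 1) / (s ^ 2 - s) := by
  have : 0 < s * (s - 1) := by nlinarith
  have : s - 1 ≠ 0 := by linarith
  rw [makespan, load_seAlloc_zero hs, load_seAlloc_one (by linarith),
    max_eq_left (le_add_of_nonneg_right (by positivity)), show s ^ 2 - s = s * (s - 1) by ring]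
  field_simp

lemma makespan_jobFavorite_le_one (hs : 2 ≤ s) :
    makespan s (jobSize s) jobFavorite jobFavorite ≤ 1 := by
  have hs0 : s ≠ 0 := by positivity
  have h0 : L jobFavorite 0 = 1 / s + (s - 1) / s := by
    rw [load_fin_three, ptime_jobSize hs0]
    simp [jobFavorite]
  have h1 : L jobFavorite 1 = 1 / (s * (s - 1)) := by
    rw [load_fin_three, ptime_jobSize hs0]
    simp [jobFavorite]
  rw [makespan, h0, h1, max_le_iff, ← add_div, add_sub_cancel, div_self hs0,
    div_le_one (by nlinarith)]
  constructor <;> nlinarith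

lemma jobB_not_improve (hs : 1 < s) (hs3 : s ^ 2 - 3 * s + 1 ≤ 0) {y : Fin 3 → Fin 2}
    (hB : y 1 = 0) (hAC : y 0 = 0 ∨ y 2 = 0) : L seAlloc 1 ≤ L y 0 := by
  have hs0 : 0 < s := by linarith
  have hs1 : 0 < s - 1 := by linarith
  rw [load_seAlloc_one hs0]
  rcases hAC with hA | hC
  · calc (1 : ℝ) ≤ 1 / (s - 1) + 1 / s := by
          rw [div_add_div _ _ hs1.ne' hs0.ne', le_div_iff₀ (by positivity)]
          nlinarith
      _ = ptime s (jobSize s) jobFavorite 0 0 + ptime s (jobSize s) jobFavorite 0 1 := by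
          rw [ptime_jobSize hs0.ne']; rfl
      _ ≤ L y 0 := ptime_add_ptime_le_load hs0.le (jobSize_nonneg hs.le) (by decide) hA hB
  · calc (1 : ℝ) = 1 / s + (s - 1) / s := by field_simp; ring
      _ = ptime s (jobSize s) jobFavorite 0 1 + ptime s (jobSize s) jobFavorite 0 2 := by
          rw [ptime_jobSize hs0.ne']; rfl
      _ ≤ L y 0 := ptime_add_ptime_le_load hs0.le (jobSize_nonneg hs.le) (by decide) hB hC

lemma jobA_not_improve (hs : 2 ≤ s) {y : Fin 3 → Fin 2}
    (hA : y 0 = 1) (hBC : y 1 = 1 ∨ y 2 = 1) : L seAlloc 0 ≤ L y 1 := by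
  have hs0 : 0 < s := by linarith
  rw [load_seAlloc_zero (by linarith)]
  rcases hBC with hB | hC
  · calc 1 + 1 / (s * (s - 1)) = 1 / (s * (s - 1)) + 1 := add_comm _ _
      _ = ptime s (jobSize s) jobFavorite 1 0 + ptime s (jobSize s) jobFavorite 1 1 := by
          rw [ptime_jobSize hs0.ne']; rfl
      _ ≤ L y 1 :=
          ptime_add_ptime_le_load hs0.le (jobSize_nonneg (by linarith)) (by decide) hA hB
  · calc 1 + 1 / (s * (s - 1)) ≤ 1 / (s * (s - 1)) + (s - 1) := by linarith
      _ = ptime s (jobSize s) jobFavorite 1 0 + ptime s (jobSize s) jobFavorite 1 2 := by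
          rw [ptime_jobSize hs0.ne']; rfl
      _ ≤ L y 1 :=
          ptime_add_ptime_le_load hs0.le (jobSize_nonneg (by linarith)) (by decide) hA hC

lemma jobC_not_improve (hs : 2 ≤ s) {y : Fin 3 → Fin 2}
    (hB : y 1 = 1) (hC : y 2 = 1) : L seAlloc 0 ≤ L y 1 := by
  have hs0 : 0 < s := by linarith
  have hs1 : 1 ≤ s - 1 := by linarith
  rw [load_seAlloc_zero (by linarith)]
  calc 1 + 1 / (s * (s - 1)) ≤ 1 + (s - 1) := by
        gcongr
        rw [div_le_iff₀ (by nlinarith)]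
        nlinarith [mul_le_mul hs1 (by nlinarith : 2 ≤ s * (s - 1)) zero_le_two (by linarith)]
    _ = ptime s (jobSize s) jobFavorite 1 1 + ptime s (jobSize s) jobFavorite 1 2 := by
        rw [ptime_jobSize hs0.ne']; rfl
    _ ≤ L y 1 :=
        ptime_add_ptime_le_load hs0.le (jobSize_nonneg (by linarith)) (by decide) hB hC

lemma isSE_seAlloc (hs : 2 ≤ s) (hs3 : s ^ 2 - 3 * s + 1 ≤ 0) :
    IsSE s (jobSize s) jobFavorite seAlloc := by
  rintro y ⟨j, hj⟩
  by_cases hB : y 1 = 0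
  · by_cases hAC : y 0 = 0 ∨ y 2 = 0
    · exact ⟨1, by simp [hB, seAlloc], hB ▸ jobB_not_improve (by linarith) hs3 hB hAC⟩
    · have hA : y 0 = 1 := by omega
      have hC : y 2 = 1 := by omega
      exact ⟨0, by simp [hA, seAlloc], hA ▸ jobA_not_improve hs hA (.inr hC)⟩
  · have hB : y 1 = 1 := by omega
    by_cases hA : y 0 = 1
    · exact ⟨0, by simp [hA, seAlloc], hA ▸ jobA_not_improve hs hA (.inl hB)⟩
    · have hC : y 2 = 1 := by
        fin_cases j <;> simp [seAlloc] at hj <;> omega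
      exact ⟨2, by simp [hC, seAlloc], hC ▸ jobC_not_improve hs hB hC⟩

end Instance

theorem spoa_lower_interval6_general
    (s₆ : ℝ)
    (hs₆root : s₆^4 - 3*s₆^3 + 3*s₆^2 - 3*s₆ + 1 = 0)
    (s : ℝ) (hs : 2 ≤ s) (hs' : s ≤ s₆)
    (q : Fin 3 → ℝ) (hq : q = ![1/(s*(s - 1)), 1/s, (s - 1)/s])
    (f : Fin 3 → Fin 2) (hf : f = ![1, 0, 0])
    (x : Fin 3 → Fin 2) (hx : x = ![0, 1, 0]) :
    IsSE s q f x ∧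
      makespan s q f x = (s^2 - s + 1)/(s^2 - s) ∧
      optMakespan s q f ≤ 1 ∧
      ((s^2 - s + 1)/(s^2 - s)) * optMakespan s q f ≤ makespan s q f x := by
  obtain rfl : q = jobSize s := hq
  obtain rfl : f = jobFavorite := hf
  obtain rfl : x = seAlloc := hx
  have hs₆neg := sq_sub_three_mul_add_one_neg_of_root (by linarith) hs₆root
  -- `(s² - 3s + 1) - (s₆² - 3s₆ + 1) = (s - s₆)(s + s₆ - 3)`
  have hs3 : s ^ 2 - 3 * s + 1 ≤ 0 := by
    nlinarith [mul_nonneg (sub_nonneg.mpr hs') (by linarith : (0 : ℝ) ≤ s + s₆ - 3)]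
  have hopt : optMakespan s (jobSize s) jobFavorite ≤ 1 :=
    (optMakespan_le_makespan (by linarith) (jobSize_nonneg (by linarith)) _).trans
      (makespan_jobFavorite_le_one hs)
  have hmk := makespan_seAlloc (s := s) (by linarith)
  refine ⟨isSE_seAlloc hs hs3, hmk, hopt, ?_⟩
  rw [hmk]
  exact mul_le_of_le_one_right (div_nonneg (by nlinarith) (by nlinarith)) hopt

theorem spoa_lower_interval6
    (s₆ : ℝ) (hs₆lo : 2 < s₆) (hs₆hi : s₆ < 3)
    (hs₆root : s₆^4 - 3*s₆^3 + 3*s₆^2 - 3*s₆ + 1 = 0)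
    (s : ℝ) (hs : 2 ≤ s) (hs' : s ≤ s₆)
    (q : Fin 3 → ℝ) (hq : q = ![1/(s*(s - 1)), 1/s, (s - 1)/s])
    (f : Fin 3 → Fin 2) (hf : f = ![1, 0, 0])
    (x : Fin 3 → Fin 2) (hx : x = ![0, 1, 0]) :
    IsSE s q f x ∧
      makespan s q f x = (s^2 - s + 1)/(s^2 - s) ∧
      optMakespan s q f ≤ 1 ∧
      ((s^2 - s + 1)/(s^2 - s)) * optMakespan s q f ≤ makespan s q f x :=
  spoa_lower_interval6_general s₆ hs₆root s hs hs' q hq f hf x hx
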